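/- Assume 0 < p_s, p_s^e < 1 and 0 < p_α ≤ 1. Then for every k ∈ ℕ, the marginals of ρ are geometric: ∑_{i∈ℕ} ρ(i,k) = P_B (1 − P_B)^k and ∑_{j∈ℕ} ρ(k,j) = P_A (1 − P_A)^k, both sums being convergent. -/

import Mathlib

/-!
Shifting both ages by one multiplies `ρ` by `λ00`, so the column sums `S k = ∑ i, ρ (i, k)`
satisfy `S (k + 1) = ρ (0, k + 1) + λ00 * S k = (λ10 + λ00) * P_B (1 - P_B) ^ k`, and
`λ10 + λ00 = 1 - P_B`; the base case `S 0 = λ11 + λ01` is a geometric series. The row sums are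
the column sums of the process with the roles of `p_s` and `p_s^e` exchanged.
-/

noncomputable section

/-- λ11 = p_α p_s p_s^e -/
def l11 (ps pse pa : ℝ) : ℝ := pa * ps * pse
/-- λ10 = p_α p_s (1 − p_s^e) -/
def l10 (ps pse pa : ℝ) : ℝ := pa * ps * (1 - pse)
/-- λ01 = p_α (1 − p_s) p_s^e -/
def l01 (ps pse pa : ℝ) : ℝ := pa * (1 - ps) * pse
/-- λ00 = p_α (1 − p_s)(1 − p_s^e) + (1 − p_α) -/
def l00 (ps pse pa : ℝ) : ℝ := pa * (1 - ps) * (1 - pse) + (1 - pa)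
/-- P_A = λ11 + λ10 -/
def PA (ps pse pa : ℝ) : ℝ := l11 ps pse pa + l10 ps pse pa
/-- P_B = λ11 + λ01 -/
def PB (ps pse pa : ℝ) : ℝ := l11 ps pse pa + l01 ps pse pa

/-- Stationary distribution ρ of the joint age process on ℕ×ℕ. -/
def rho (ps pse pa : ℝ) : ℕ × ℕ → ℝ := fun ij =>
  if ij.1 = ij.2 then l11 ps pse pa * l00 ps pse pa ^ ij.1
  else if ij.1 < ij.2 then
    l10 ps pse pa * PB ps pse pa * (1 - PB ps pse pa) ^ (ij.2 - ij.1 - 1) *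
      l00 ps pse pa ^ ij.1
  else
    l01 ps pse pa * PA ps pse pa * (1 - PA ps pse pa) ^ (ij.1 - ij.2 - 1) *
      l00 ps pse pa ^ ij.2

section

variable (ps pse pa : ℝ)

lemma rho_swap (i j : ℕ) : rho ps pse pa (i, j) = rho pse ps pa (j, i) := by
  simp only [rho, l11, l10, l01, l00, PA, PB, eq_comm (a := j)]
  rcases lt_trichotomy i j with h | rfl | h
  · simp only [h.ne, h, h.not_gt, ↓reduceIte]; ring
  · simp only [↓reduceIte]; ring
  · simp only [h.ne', h, h.not_gt, ↓reduceIte]; ring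

lemma PB_swap : PB pse ps pa = PA ps pse pa := by
  simp only [PA, PB, l11, l10, l01]; ring

lemma l00_add_l10 : l00 ps pse pa + l10 ps pse pa = 1 - PB ps pse pa := by
  simp only [l00, l10, PB, l11, l01]; ring

lemma abs_one_sub_PA_lt_one (hs0 : 0 < ps) (hs1 : ps < 1) (ha0 : 0 < pa) (ha1 : pa ≤ 1) :
    |1 - PA ps pse pa| < 1 := by
  rw [abs_lt]
  simp only [PA, l11, l10]
  constructor <;> nlinarith [mul_pos ha0 hs0]

lemma rho_zero_zero : rho ps pse pa (0, 0) = l11 ps pse pa := by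
  simp [rho]

lemma rho_succ_zero (n : ℕ) :
    rho ps pse pa (n + 1, 0) = l01 ps pse pa * PA ps pse pa * (1 - PA ps pse pa) ^ n := by
  simp [rho]

lemma rho_zero_succ (k : ℕ) :
    rho ps pse pa (0, k + 1) = l10 ps pse pa * PB ps pse pa * (1 - PB ps pse pa) ^ k := by
  simp [rho]

lemma rho_succ_succ (i j : ℕ) :
    rho ps pse pa (i + 1, j + 1) = l00 ps pse pa * rho ps pse pa (i, j) := by
  simp only [rho, add_left_inj, add_lt_add_iff_right, Nat.add_sub_add_right]
  split_ifs <;> ring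

lemma hasSum_rho_fst_zero (hA : |1 - PA ps pse pa| < 1) :
    HasSum (fun i => rho ps pse pa (i, 0)) (PB ps pse pa) := by
  have hA0 : PA ps pse pa ≠ 0 := by
    rintro h; rw [h] at hA; norm_num at hA
  have htail := (hasSum_geometric_of_abs_lt_one hA).mul_left (l01 ps pse pa * PA ps pse pa)
  rw [sub_sub_cancel, mul_assoc, mul_inv_cancel₀ hA0, mul_one] at htail
  simp only [← rho_succ_zero] at htail
  simpa only [rho_zero_zero, PB] using htail.zero_add (f := fun i => rho ps pse pa (i, 0))

lemma hasSum_rho_fst (hA : |1 - PA ps pse pa| < 1) (k : ℕ) :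
    HasSum (fun i => rho ps pse pa (i, k)) (PB ps pse pa * (1 - PB ps pse pa) ^ k) := by
  induction k with
  | zero => simpa using hasSum_rho_fst_zero ps pse pa hA
  | succ k ih =>
    have htail := ih.mul_left (l00 ps pse pa)
    simp only [← rho_succ_succ] at htail
    have hsplit : PB ps pse pa * (1 - PB ps pse pa) ^ (k + 1) =
        rho ps pse pa (0, k + 1) + l00 ps pse pa * (PB ps pse pa * (1 - PB ps pse pa) ^ k) := by
      rw [rho_zero_succ, pow_succ, ← l00_add_l10]
      ring
    rw [hsplit]
    exact htail.zero_add (f := fun i => rho ps pse pa (i, k + 1))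

end

/-- The marginals of ρ are geometric with parameters P_B and P_A. -/
theorem stmt12 (ps pse pa : ℝ)
    (hs0 : 0 < ps) (hs1 : ps < 1) (he0 : 0 < pse) (he1 : pse < 1)
    (ha0 : 0 < pa) (ha1 : pa ≤ 1) :
    ∀ k : ℕ,
      HasSum (fun i => rho ps pse pa (i, k)) (PB ps pse pa * (1 - PB ps pse pa) ^ k) ∧
      HasSum (fun j => rho ps pse pa (k, j)) (PA ps pse pa * (1 - PA ps pse pa) ^ k) := by
  intro k
  refine ⟨hasSum_rho_fst ps pse pa (abs_one_sub_PA_lt_one ps pse pa hs0 hs1 ha0 ha1) k, ?_⟩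
  simpa only [rho_swap pse ps pa, PB_swap] using
    hasSum_rho_fst pse ps pa (abs_one_sub_PA_lt_one pse ps pa he0 he1 ha0 ha1) k
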